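/- Fix an integer K ≥ 1 and set λ_k = c_λ K^{(p−3)/3} for all 0 ≤ k < K. Then min_{1 ≤ i ≤ K} ‖∇f(x_i)‖ ≤ (2 c_λ^{1/p}/K^{2/3}) · (12Δ + 2M (M/c_λ)^{3/(p−3)})^{1−1/p}. -/

import Mathlib

/-!
By the cubic Taylor bound and the inexact optimality condition paired with `s`, each step
decreases `f` by at least `λ/4 ‖s‖^p - M/6 ‖s‖^3`, and Young's inequality turns this into
`λ/12 ‖s‖^p - M/6 (M/λ)^{3/(p-3)}`. Telescoping over the `K` steps gives a step `s_k` with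
`λ/12 ‖s_k‖^p ≤ Δ/K + M/6 (M/λ)^{3/(p-3)}`, while the optimality condition and the Lipschitz
Hessian bound the next gradient by `M/2 ‖s_k‖^2 + 3λ/2 ‖s_k‖^{p-1}`. For `λ = c K^{(p-3)/3}` the
substitution `u = K^{1/3} ‖s_k‖` pulls out the factor `K^{-2/3}` and leaves the scale-free
constraint `c u^p ≤ 12Δ + 2M (M/c)^{3/(p-3)}`.
-/

open scoped RealInnerProductSpace

section Taylor

variable {E F : Type*} [NormedAddCommGroup E] [NormedSpace ℝ E]
  [NormedAddCommGroup F] [NormedSpace ℝ F] {f' : E → F} {H : E → E →L[ℝ] F} {M : ℝ}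

theorem hasDerivAt_add_smul (x s : E) (t : ℝ) : HasDerivAt (fun t : ℝ => x + t • s) s t := by
  simpa using ((hasDerivAt_id t).smul_const s).const_add x

theorem norm_sub_sub_le_of_lipschitz_fderiv (hf' : ∀ y, HasFDerivAt f' (H y) y)
    (hlip : ∀ y z, ‖H y - H z‖ ≤ M * ‖y - z‖) (x s : E) :
    ‖f' (x + s) - f' x - H x s‖ ≤ M / 2 * ‖s‖ ^ 2 := by
  set g : ℝ → F := fun t => f' (x + t • s) - f' x - t • H x s
  have hg : ∀ t : ℝ, HasDerivAt g (H (x + t • s) s - H x s) t := fun t =>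
    (((hf' _).comp_hasDerivAt t (hasDerivAt_add_smul x s t)).sub_const (f' x)).sub
      (by simpa using (hasDerivAt_id t).smul_const (H x s))
  have hbound : ∀ t ∈ Set.Ico (0 : ℝ) 1, ‖H (x + t • s) s - H x s‖ ≤ M * ‖s‖ ^ 2 * t :=
    fun t ht => calc
      ‖H (x + t • s) s - H x s‖ ≤ ‖H (x + t • s) - H x‖ * ‖s‖ := by
        simpa using (H (x + t • s) - H x).le_opNorm s
      _ ≤ M * ‖t • s‖ * ‖s‖ := by gcongr; simpa using hlip (x + t • s) x
      _ = M * ‖s‖ ^ 2 * t := by rw [norm_smul, Real.norm_of_nonneg ht.1]; ring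
  have := image_norm_le_of_norm_deriv_right_le_deriv_boundary
    (B := fun t => M * ‖s‖ ^ 2 / 2 * t ^ 2) (fun t _ => (hg t).continuousAt.continuousWithinAt)
    (fun t _ => (hg t).hasDerivWithinAt) (by simp [g])
    (fun t => ((hasDerivAt_pow 2 t).const_mul (M * ‖s‖ ^ 2 / 2)).congr_deriv (by ring))
    hbound (x := 1) (by simp)
  simp only [g, one_smul, one_pow, mul_one] at this
  linarith

end Taylor

section RealInequalities

open Real

variable {M c p q u t Δ A B K lam κ : ℝ}

theorem rpow_le_rpow_div_of_rpow_le (hu : 0 ≤ u) (hq : 0 ≤ q) (hp : 0 < p) (h : u ^ p ≤ B) :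
    u ^ q ≤ B ^ (q / p) :=
  calc u ^ q = (u ^ p) ^ (q / p) := by rw [← rpow_mul hu, mul_div_cancel₀ _ hp.ne']
    _ ≤ B ^ (q / p) := by gcongr

theorem mul_rpow_le_mul_rpow_add (hM : 0 ≤ M) (hlam : 0 < lam) (hu : 0 ≤ u) (hq : 0 ≤ q)
    (hqp : q < p) : M * u ^ q ≤ lam * u ^ p + M * (M / lam) ^ (q / (p - q)) := by
  rcases le_or_gt M (lam * u ^ (p - q)) with hle | hlt
  · have hsplit : u ^ p = u ^ (p - q) * u ^ q := by
      rw [← rpow_add' hu (by linarith)]; ring_nf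
    calc M * u ^ q ≤ lam * u ^ (p - q) * u ^ q := by gcongr
      _ = lam * u ^ p := by rw [hsplit, mul_assoc]
      _ ≤ _ := le_add_of_nonneg_right (by positivity)
  · have : u ^ q ≤ (M / lam) ^ (q / (p - q)) :=
      rpow_le_rpow_div_of_rpow_le hu hq (by linarith) ((le_div_iff₀' hlam).mpr hlt.le)
    calc M * u ^ q ≤ M * (M / lam) ^ (q / (p - q)) := by gcongr
      _ ≤ _ := le_add_of_nonneg_left (by positivity)

theorem add_le_rpow_of_mul_rpow_le (hM : 0 ≤ M) (hc : 0 < c) (hp : 3 < p) (hu : 0 ≤ u)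
    (huA : c * u ^ p ≤ A) (hMA : 2 * M * (M / c) ^ (3 / (p - 3)) ≤ A) :
    M / 2 * u ^ 2 + 3 * c / 2 * u ^ (p - 1) ≤ 2 * c ^ (1 / p) * A ^ (1 - 1 / p) := by
  have hp3 : 0 < p - 3 := by linarith
  have hp0 : 0 < p := by linarith
  set B := A / c
  have huB : u ^ p ≤ B := (le_div_iff₀' hc).mpr huA
  have hA : 0 ≤ A := (mul_nonneg hc.le (rpow_nonneg hu p)).trans huA
  have hB : 0 ≤ B := div_nonneg hA hc.le
  have hMB : (M / c) ^ (p / (p - 3)) ≤ B := by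
    rw [show p / (p - 3) = 1 + 3 / (p - 3) by field_simp; ring,
      rpow_one_add' (by positivity) (by positivity), div_mul_eq_mul_div]
    exact div_le_div_of_nonneg_right
      (by nlinarith [rpow_nonneg (div_nonneg hM hc.le) (3 / (p - 3))]) hc.le
  have hm : M / c ≤ B ^ ((p - 3) / p) := by
    simpa [one_div_div] using
      rpow_le_rpow_div_of_rpow_le (q := 1) (by positivity) zero_le_one (by positivity) hMB
  have hu2 : u ^ 2 ≤ B ^ (2 / p) := by
    rw [← rpow_two]; exact rpow_le_rpow_div_of_rpow_le hu zero_le_two (by linarith) huB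
  have hu1 : u ^ (p - 1) ≤ B ^ ((p - 1) / p) :=
    rpow_le_rpow_div_of_rpow_le hu (by linarith) (by linarith) huB
  have hmu : M / c * u ^ 2 ≤ B ^ ((p - 1) / p) := by
    rw [show (p - 1) / p = (p - 3) / p + 2 / p by ring,
      rpow_add' hB (add_pos (div_pos hp3 hp0) (div_pos two_pos hp0)).ne']
    exact mul_le_mul hm hu2 (by positivity) (by positivity)
  have hcB : c * B ^ ((p - 1) / p) = c ^ (1 / p) * A ^ (1 - 1 / p) := by
    rw [div_rpow hA hc.le, show (p - 1) / p = 1 - 1 / p by field_simp, mul_div_assoc',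
      div_eq_iff (by positivity), mul_right_comm, ← rpow_add hc]
    norm_num
  calc M / 2 * u ^ 2 + 3 * c / 2 * u ^ (p - 1)
      = c * (M / c * u ^ 2) / 2 + 3 * c / 2 * u ^ (p - 1) := by field_simp
    _ ≤ c * B ^ ((p - 1) / p) / 2 + 3 * c / 2 * B ^ ((p - 1) / p) := by gcongr
    _ = 2 * c ^ (1 / p) * A ^ (1 - 1 / p) := by rw [mul_assoc, ← hcB]; ring

theorem add_le_rpow_of_sub_le_div_cube (hM : 0 ≤ M) (hc : 0 < c) (hp : 3 < p) (hκ : 0 < κ)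
    (ht : 0 ≤ t) (hΔ : 0 ≤ Δ)
    (h : c * κ ^ (p - 3) / 12 * t ^ p - M / 6 * (M / (c * κ ^ (p - 3))) ^ (3 / (p - 3))
      ≤ Δ / κ ^ 3) :
    M / 2 * t ^ 2 + 3 * (c * κ ^ (p - 3)) / 2 * t ^ (p - 1)
      ≤ 2 * c ^ (1 / p) / κ ^ 2 * (12 * Δ + 2 * M * (M / c) ^ (3 / (p - 3))) ^ (1 - 1 / p) := by
  have hp3 : 0 < p - 3 := by linarith
  have hκp : ∀ r : ℝ, ∀ n : ℕ, κ ^ (r - n) * κ ^ n = κ ^ r := fun r n => by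
    rw [← rpow_natCast, ← rpow_add hκ]; ring_nf
  have hscale : (M / (c * κ ^ (p - 3))) ^ (3 / (p - 3)) = (M / c) ^ (3 / (p - 3)) / κ ^ 3 := by
    rw [← div_div, div_rpow (by positivity) (by positivity), ← rpow_mul hκ.le,
      mul_div_cancel₀ _ hp3.ne']
    norm_num
  have hu : c * (κ * t) ^ p ≤ 12 * Δ + 2 * M * (M / c) ^ (3 / (p - 3)) := by
    rw [hscale, sub_le_iff_le_add, mul_div_assoc', ← add_div, le_div_iff₀ (by positivity)] at h
    rw [mul_rpow hκ.le ht, ← hκp p 3]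
    linarith
  have hgrad : M / 2 * t ^ 2 + 3 * (c * κ ^ (p - 3)) / 2 * t ^ (p - 1)
      = (M / 2 * (κ * t) ^ 2 + 3 * c / 2 * (κ * t) ^ (p - 1)) / κ ^ 2 := by
    rw [mul_rpow hκ.le ht, ← hκp (p - 1) 2]
    field_simp
    ring_nf
  rw [hgrad, div_le_iff₀ (by positivity)]
  calc _ ≤ 2 * c ^ (1 / p) * (12 * Δ + 2 * M * (M / c) ^ (3 / (p - 3))) ^ (1 - 1 / p) :=
        add_le_rpow_of_mul_rpow_le hM hc hp (by positivity) hu (by linarith)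
    _ = _ := by field_simp

theorem add_le_rpow_of_sub_le_div (hM : 0 ≤ M) (hc : 0 < c) (hp : 3 < p) (hK : 0 < K)
    (ht : 0 ≤ t) (hΔ : 0 ≤ Δ)
    (h : c * K ^ ((p - 3) / 3) / 12 * t ^ p
      - M / 6 * (M / (c * K ^ ((p - 3) / 3))) ^ (3 / (p - 3)) ≤ Δ / K) :
    M / 2 * t ^ 2 + 3 * (c * K ^ ((p - 3) / 3)) / 2 * t ^ (p - 1)
      ≤ 2 * c ^ (1 / p) / K ^ ((2 : ℝ) / 3) *
        (12 * Δ + 2 * M * (M / c) ^ (3 / (p - 3))) ^ (1 - 1 / p) := by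
  obtain ⟨κ, hκ, rfl⟩ : ∃ κ > 0, K = κ ^ 3 :=
    ⟨K ^ (1 / 3 : ℝ), by positivity, by rw [← rpow_natCast, ← rpow_mul hK.le]; norm_num⟩
  have hcube : ∀ r : ℝ, (κ ^ 3) ^ (r / 3) = κ ^ r := fun r => by
    rw [← rpow_natCast, ← rpow_mul hκ.le]; ring_nf
  rw [hcube] at h ⊢
  rw [hcube, rpow_two]
  exact add_le_rpow_of_sub_le_div_cube hM hc hp hκ ht hΔ h

theorem exists_lt_le_div_of_le_sub_succ {u d : ℕ → ℝ} {n : ℕ} (hn : 0 < n)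
    (h : ∀ k < n, d k ≤ u k - u (k + 1)) : ∃ k < n, d k ≤ (u 0 - u n) / n := by
  have hsum : ∑ k ∈ Finset.range n, d k ≤ ∑ _k ∈ Finset.range n, (u 0 - u n) / n := by
    rw [Finset.sum_const, Finset.card_range, nsmul_eq_mul, mul_div_cancel₀ _ (by positivity),
      ← Finset.sum_range_sub' u n]
    exact Finset.sum_le_sum fun k hk => h k (Finset.mem_range.mp hk)
  obtain ⟨k, hk, hdk⟩ := Finset.exists_le_of_sum_le (Finset.nonempty_range_iff.mpr hn.ne') hsum
  exact ⟨k, Finset.mem_range.mp hk, hdk⟩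

end RealInequalities

section RegularizedNewtonStep

variable {E : Type*} [NormedAddCommGroup E] [NormedSpace ℝ E]
  {f' : E → E} {H : E → E →L[ℝ] E} {M p lam : ℝ} {x s : E}

def IsRegularizedNewtonStep (f' : E → E) (H : E → E →L[ℝ] E) (p lam : ℝ) (x s : E) : Prop :=
  ‖f' x + H x s + (lam * ‖s‖ ^ (p - 2)) • s‖ ≤ lam / 2 * ‖s‖ ^ (p - 1)

theorem IsRegularizedNewtonStep.norm_grad_le (hstep : IsRegularizedNewtonStep f' H p lam x s)
    (hf' : ∀ y, HasFDerivAt f' (H y) y) (hlip : ∀ y z, ‖H y - H z‖ ≤ M * ‖y - z‖)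
    (hp : 1 < p) (hlam : 0 ≤ lam) :
    ‖f' (x + s)‖ ≤ M / 2 * ‖s‖ ^ 2 + 3 * lam / 2 * ‖s‖ ^ (p - 1) := by
  have hreg : ‖(lam * ‖s‖ ^ (p - 2)) • s‖ = lam * ‖s‖ ^ (p - 1) := by
    rw [norm_smul, Real.norm_of_nonneg (by positivity), mul_assoc,
      ← Real.rpow_add_one' (norm_nonneg s) (by linarith)]
    ring_nf
  calc ‖f' (x + s)‖
      = ‖(f' (x + s) - f' x - H x s) + (f' x + H x s + (lam * ‖s‖ ^ (p - 2)) • s)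
          - (lam * ‖s‖ ^ (p - 2)) • s‖ := by congr 1; abel
    _ ≤ ‖f' (x + s) - f' x - H x s‖ + ‖f' x + H x s + (lam * ‖s‖ ^ (p - 2)) • s‖
          + ‖(lam * ‖s‖ ^ (p - 2)) • s‖ := norm_sub_le_of_le (norm_add_le _ _) le_rfl
    _ ≤ M / 2 * ‖s‖ ^ 2 + lam / 2 * ‖s‖ ^ (p - 1) + lam * ‖s‖ ^ (p - 1) := by
      rw [hreg]; gcongr; exacts [norm_sub_sub_le_of_lipschitz_fderiv hf' hlip x s, hstep]
    _ = M / 2 * ‖s‖ ^ 2 + 3 * lam / 2 * ‖s‖ ^ (p - 1) := by ring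

end RegularizedNewtonStep

section Descent

variable {E : Type*} [NormedAddCommGroup E] [InnerProductSpace ℝ E] [CompleteSpace E]
  {f : E → ℝ} {f' : E → E} {H : E → E →L[ℝ] E} {M p lam : ℝ} {x s : E}

theorem le_cubic_model_of_lipschitz_hessian (hf : ∀ y, HasGradientAt f (f' y) y)
    (hf' : ∀ y, HasFDerivAt f' (H y) y) (hlip : ∀ y z, ‖H y - H z‖ ≤ M * ‖y - z‖) (x s : E) :
    f (x + s) ≤ f x + ⟪f' x, s⟫ + 1 / 2 * ⟪H x s, s⟫ + M / 6 * ‖s‖ ^ 3 := by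
  set φ : ℝ → ℝ := fun t => f (x + t • s) - f x - t * ⟪f' x, s⟫ - t ^ 2 / 2 * ⟪H x s, s⟫
  have hφ : ∀ t : ℝ, HasDerivAt φ (⟪f' (x + t • s) - f' x - H x (t • s), s⟫) t := by
    intro t
    have hft : HasDerivAt (fun t : ℝ => f (x + t • s)) (⟪f' (x + t • s), s⟫) t := by
      simpa [Function.comp_def] using
        (hf _).hasFDerivAt.comp_hasDerivAt t (hasDerivAt_add_smul x s t)
    have hquad : HasDerivAt (fun t : ℝ => t ^ 2 / 2 * ⟪H x s, s⟫) (t * ⟪H x s, s⟫) t :=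
      (((hasDerivAt_pow 2 t).div_const 2).mul_const _).congr_deriv (by ring)
    refine (((hft.sub_const (f x)).sub ((hasDerivAt_id t).mul_const ⟪f' x, s⟫)).sub
      hquad).congr_deriv ?_
    simp [inner_sub_left, real_inner_smul_left]
  have hbound : ∀ t ∈ Set.Ico (0 : ℝ) 1,
      ‖⟪f' (x + t • s) - f' x - H x (t • s), s⟫‖ ≤ M * ‖s‖ ^ 3 / 2 * t ^ 2 :=
    fun t ht => calc
      ‖⟪f' (x + t • s) - f' x - H x (t • s), s⟫‖
          ≤ ‖f' (x + t • s) - f' x - H x (t • s)‖ * ‖s‖ := norm_inner_le_norm _ _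
      _ ≤ M / 2 * ‖t • s‖ ^ 2 * ‖s‖ := by
        gcongr; exact norm_sub_sub_le_of_lipschitz_fderiv hf' hlip x (t • s)
      _ = M * ‖s‖ ^ 3 / 2 * t ^ 2 := by
        rw [norm_smul, Real.norm_of_nonneg ht.1]; ring
  have := image_norm_le_of_norm_deriv_right_le_deriv_boundary
    (B := fun t => M * ‖s‖ ^ 3 / 6 * t ^ 3) (fun t _ => (hφ t).continuousAt.continuousWithinAt)
    (fun t _ => (hφ t).hasDerivWithinAt) (by simp [φ])
    (fun t => ((hasDerivAt_pow 3 t).const_mul (M * ‖s‖ ^ 3 / 6)).congr_deriv (by ring))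
    hbound (x := 1) (by simp)
  simp only [φ, one_smul, one_pow, one_mul, mul_one, Real.norm_eq_abs] at this
  linarith [le_abs_self (f (x + s) - f x - ⟪f' x, s⟫ - 1 / 2 * ⟪H x s, s⟫)]

theorem IsRegularizedNewtonStep.le_sub_add (hstep : IsRegularizedNewtonStep f' H p lam x s)
    (hf : ∀ y, HasGradientAt f (f' y) y) (hf' : ∀ y, HasFDerivAt f' (H y) y)
    (hlip : ∀ y z, ‖H y - H z‖ ≤ M * ‖y - z‖) (hp : 1 < p) (hdesc : ⟪f' x, s⟫ ≤ 0) :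
    f (x + s) ≤ f x - lam / 4 * ‖s‖ ^ p + M / 6 * ‖s‖ ^ 3 := by
  have hs := norm_nonneg s
  have hinner : ⟪f' x + H x s + (lam * ‖s‖ ^ (p - 2)) • s, s⟫ ≤ lam / 2 * ‖s‖ ^ (p - 1) * ‖s‖ :=
    (real_inner_le_norm _ _).trans (by gcongr; exact hstep)
  have hpow₁ : ‖s‖ ^ (p - 2) * ‖s‖ ^ 2 = ‖s‖ ^ p := by
    rw [← Real.rpow_natCast, ← Real.rpow_add' hs (by push_cast; linarith)]; norm_num
  have hpow₂ : ‖s‖ ^ (p - 1) * ‖s‖ = ‖s‖ ^ p := by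
    rw [← Real.rpow_add_one' hs (by linarith)]; norm_num
  rw [inner_add_left, inner_add_left, real_inner_smul_left, real_inner_self_eq_norm_sq,
    mul_assoc, hpow₁, mul_assoc, hpow₂] at hinner
  linarith [le_cubic_model_of_lipschitz_hessian hf hf' hlip x s]

theorem IsRegularizedNewtonStep.sufficient_decrease
    (hstep : IsRegularizedNewtonStep f' H p lam x s)
    (hf : ∀ y, HasGradientAt f (f' y) y) (hf' : ∀ y, HasFDerivAt f' (H y) y)
    (hlip : ∀ y z, ‖H y - H z‖ ≤ M * ‖y - z‖) (hM : 0 ≤ M) (hp : 3 < p) (hlam : 0 < lam)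
    (hdesc : ⟪f' x, s⟫ ≤ 0) :
    lam / 12 * ‖s‖ ^ p - M / 6 * (M / lam) ^ (3 / (p - 3)) ≤ f x - f (x + s) := by
  have hyoung := mul_rpow_le_mul_rpow_add hM hlam (norm_nonneg s) zero_le_three hp
  norm_num at hyoung
  linarith [hstep.le_sub_add hf hf' hlip (by linarith) hdesc]

end Descent

theorem hor_newton_rate_fixed_horizon_general
    {E : Type*} [NormedAddCommGroup E] [InnerProductSpace ℝ E] [CompleteSpace E]
    (f : E → ℝ) (f' : E → E) (H : E → E →L[ℝ] E)
    (hf : ∀ y, HasGradientAt f (f' y) y)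
    (hf' : ∀ y, HasFDerivAt f' (H y) y)
    (M : ℝ) (hM : 0 < M)
    (hlip : ∀ y z, ‖H y - H z‖ ≤ M * ‖y - z‖)
    (hbdd : BddBelow (Set.range f))
    (p : ℝ) (hp : 3 < p)
    (c : ℝ) (hc : 0 < c)
    (K : ℕ) (hK : 1 ≤ K)
    (lam : ℕ → ℝ)
    (hlamdef : ∀ k < K, lam k = c * (K : ℝ) ^ ((p - 3) / 3))
    (x s : ℕ → E)
    (hx : ∀ k, x (k + 1) = x k + s k)
    (hopt : ∀ k, ‖f' (x k) + H (x k) (s k) + (lam k * ‖s k‖ ^ (p - 2)) • s k‖ ≤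
      lam k / 2 * ‖s k‖ ^ (p - 1))
    (hdesc : ∀ k, (⟪f' (x k), s k⟫) ≤ 0)
    (Δ : ℝ) (hΔ : Δ = f (x 0) - ⨅ y, f y) :
    (Finset.Icc 1 K).inf' (Finset.nonempty_Icc.mpr hK) (fun i => ‖f' (x i)‖) ≤
      2 * c ^ ((1 : ℝ) / p) / (K : ℝ) ^ ((2 : ℝ) / 3) *
        (12 * Δ + 2 * M * (M / c) ^ (3 / (p - 3))) ^ (1 - 1 / p) := by
  have hK0 : (0 : ℝ) < K := by exact_mod_cast hK
  set lam₀ := c * (K : ℝ) ^ ((p - 3) / 3)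
  have hlam₀ : 0 < lam₀ := by positivity
  have hstep : ∀ k < K, IsRegularizedNewtonStep f' H p lam₀ (x k) (s k) := fun k hk =>
    hlamdef k hk ▸ hopt k
  have hdecrease : ∀ k < K, lam₀ / 12 * ‖s k‖ ^ p - M / 6 * (M / lam₀) ^ (3 / (p - 3))
      ≤ f (x k) - f (x (k + 1)) := fun k hk => by
    rw [hx k]; exact (hstep k hk).sufficient_decrease hf hf' hlip hM.le hp hlam₀ (hdesc k)
  obtain ⟨k, hk, hdk⟩ := exists_lt_le_div_of_le_sub_succ (by omega) hdecrease
  have hΔK : f (x 0) - f (x K) ≤ Δ := by linarith [ciInf_le hbdd (x K)]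
  have hΔ₀ : 0 ≤ Δ := by linarith [ciInf_le hbdd (x 0)]
  calc (Finset.Icc 1 K).inf' (Finset.nonempty_Icc.mpr hK) (fun i => ‖f' (x i)‖)
      ≤ ‖f' (x (k + 1))‖ := Finset.inf'_le _ (Finset.mem_Icc.mpr ⟨by omega, by omega⟩)
    _ ≤ M / 2 * ‖s k‖ ^ 2 + 3 * lam₀ / 2 * ‖s k‖ ^ (p - 1) := by
      rw [hx k]; exact (hstep k hk).norm_grad_le hf' hlip (by linarith) hlam₀.le
    _ ≤ _ := add_le_rpow_of_sub_le_div hM.le hc hp hK0 (norm_nonneg _) hΔ₀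
      (hdk.trans (by gcongr))

/-- Fixed-horizon rate for the higher-order regularized Newton method with
`λ_k = c_λ K^{(p-3)/3}` for `0 ≤ k < K`:
`min_{1 ≤ i ≤ K} ‖∇f(x_i)‖ ≤ (2 c_λ^{1/p}/K^{2/3}) (12Δ + 2M (M/c_λ)^{3/(p-3)})^{1-1/p}`. -/
theorem hor_newton_rate_fixed_horizon
    {E : Type*} [NormedAddCommGroup E] [InnerProductSpace ℝ E] [CompleteSpace E]
    (f : E → ℝ) (f' : E → E) (H : E → E →L[ℝ] E)
    (hf : ∀ y, HasGradientAt f (f' y) y)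
    (hf' : ∀ y, HasFDerivAt f' (H y) y)
    (M : ℝ) (hM : 0 < M)
    (hlip : ∀ y z, ‖H y - H z‖ ≤ M * ‖y - z‖)
    (hbdd : BddBelow (Set.range f))
    (p : ℝ) (hp : 3 < p)
    (c : ℝ) (hc : 0 < c)
    (K : ℕ) (hK : 1 ≤ K)
    (lam : ℕ → ℝ) (hlam : ∀ k, 0 < lam k)
    (hlamdef : ∀ k < K, lam k = c * (K : ℝ) ^ ((p - 3) / 3))
    (x s : ℕ → E)
    (hx : ∀ k, x (k + 1) = x k + s k)
    (hopt : ∀ k, ‖f' (x k) + H (x k) (s k) + (lam k * ‖s k‖ ^ (p - 2)) • s k‖ ≤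
      lam k / 2 * ‖s k‖ ^ (p - 1))
    (hdesc : ∀ k, (⟪f' (x k), s k⟫) ≤ 0)
    (Δ : ℝ) (hΔ : Δ = f (x 0) - ⨅ y, f y) :
    (Finset.Icc 1 K).inf' (Finset.nonempty_Icc.mpr hK) (fun i => ‖f' (x i)‖) ≤
      2 * c ^ ((1 : ℝ) / p) / (K : ℝ) ^ ((2 : ℝ) / 3) *
        (12 * Δ + 2 * M * (M / c) ^ (3 / (p - 3))) ^ (1 - 1 / p) :=
  hor_newton_rate_fixed_horizon_general f f' H hf hf' M hM hlip hbdd p hp c hc K hK lam hlamdef x s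
    hx hopt hdesc Δ hΔ
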